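/- Let R = ℚ[A₀, A₁, A₂, …, B₀, B₁, B₂, …, Q] be the polynomial ring over ℚ in countably many variables Aᵢ, Bᵢ (i ≥ 0) and Q. Let Dₓ : R → R be the unique ℚ-derivation with Dₓ(Aᵢ) = A_{i+1}, Dₓ(Bᵢ) = B_{i+1}, Dₓ(Q) = Q·A₁, and let D_y : R → R be the unique ℚ-derivation with D_y(Aᵢ) = B_{i+1}, D_y(Bᵢ) = Dₓⁱ(Q·A₁), D_y(Q) = Q·B₁. Set △ = B₁² − Q·A₁². Then the following identity holds in R: Q·(△²·Dₓ²(A₀) + △·Dₓ²(△) − (Dₓ(△))²) = −△²·D_y²(A₀) + △·D_y²(△) − (D_y(△))². -/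
import Mathlib


/-- Variables of the free polynomial ring `ℚ[A₀, A₁, …, B₀, B₁, …, Q]`. -/
inductive TodaVar : Type
  | A : ℕ → TodaVar
  | B : ℕ → TodaVar
  | Q : TodaVar

open MvPolynomial

/-- The derivation `Dₓ` with `Dₓ(Aᵢ) = A_{i+1}`, `Dₓ(Bᵢ) = B_{i+1}`, `Dₓ(Q) = Q·A₁`. -/
noncomputable def Dx :
    Derivation ℚ (MvPolynomial TodaVar ℚ) (MvPolynomial TodaVar ℚ) :=
  mkDerivation ℚ fun v =>
    match v with
    | .A n => X (.A (n + 1))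
    | .B n => X (.B (n + 1))
    | .Q => X .Q * X (.A 1)

/-- The derivation `D_y` with `D_y(Aᵢ) = B_{i+1}`, `D_y(Bᵢ) = Dₓⁱ(Q·A₁)`,
`D_y(Q) = Q·B₁`. -/
noncomputable def Dy :
    Derivation ℚ (MvPolynomial TodaVar ℚ) (MvPolynomial TodaVar ℚ) :=
  mkDerivation ℚ fun v =>
    match v with
    | .A n => X (.B (n + 1))
    | .B n => (⇑Dx)^[n] (X .Q * X (.A 1))
    | .Q => X .Q * X (.B 1)

/-- `△ = B₁² − Q·A₁²`. -/
noncomputable def Δtoda : MvPolynomial TodaVar ℚ :=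
  X (.B 1) ^ 2 - X .Q * X (.A 1) ^ 2


lemma DxA (n : ℕ) : Dx (X (.A n)) = X (.A (n+1)) := by simp [Dx, mkDerivation_X]
lemma DxB (n : ℕ) : Dx (X (.B n)) = X (.B (n+1)) := by simp [Dx, mkDerivation_X]
lemma DxQ : Dx (X .Q) = X .Q * X (.A 1) := by simp [Dx, mkDerivation_X]
lemma DyA (n : ℕ) : Dy (X (.A n)) = X (.B (n+1)) := by simp [Dy, mkDerivation_X]
lemma DyB (n : ℕ) : Dy (X (.B n)) = (⇑Dx)^[n] (X .Q * X (.A 1)) := by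
  simp [Dy, mkDerivation_X]
lemma DyQ : Dy (X .Q) = X .Q * X (.B 1) := by simp [Dy, mkDerivation_X]

/-- The polynomial identity equivalent to the genus 1 Toda equation:
`Q·(△²·Dₓ²(A₀) + △·Dₓ²(△) − (Dₓ△)²) = −△²·D_y²(A₀) + △·D_y²(△) − (D_y△)²`. -/
theorem toda_genus_one_polynomial_identity :
    X .Q * (Δtoda ^ 2 * Dx (Dx (X (.A 0))) + Δtoda * Dx (Dx Δtoda) - (Dx Δtoda) ^ 2)
      = -Δtoda ^ 2 * Dy (Dy (X (.A 0))) + Δtoda * Dy (Dy Δtoda) - (Dy Δtoda) ^ 2 := by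
  have hΔ : Δtoda = X (.B 1) * X (.B 1) - X .Q * (X (.A 1) * X (.A 1)) := by
    rw [Δtoda]; ring
  have h2x : Dx 2 = 0 := by
    rw [show (2 : MvPolynomial TodaVar ℚ) = ((2 : ℕ) : MvPolynomial TodaVar ℚ) by norm_cast]
    exact Derivation.map_natCast Dx 2
  have h2y : Dy 2 = 0 := by
    rw [show (2 : MvPolynomial TodaVar ℚ) = ((2 : ℕ) : MvPolynomial TodaVar ℚ) by norm_cast]
    exact Derivation.map_natCast Dy 2
  simp only [hΔ, map_sub, map_add, h2x, h2y, mul_zero, zero_mul, smul_zero, add_zero, zero_add,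
    Derivation.leibniz, DxA, DxB, DxQ, DyA, DyB, DyQ,
    Function.iterate_one, Function.iterate_succ, Function.iterate_zero, Function.comp_apply,
    id_eq, smul_eq_mul]
  ring
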